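/- For every positive integer r, ∑_{k=0}^{r−1} (−1)^k π^{2k} ζ(2r−2k)/(2k+1)! = (−1)^{r−1} r · π^{2r}/(2r+1)!. -/

import Mathlib

/-! Euler's formula `ζ(2m) = (-1)^(m+1) 2^(2m-1) π^(2m) B_(2m) / (2m)!` turns the left-hand side
into `(-1)^(r-1) π^(2r) / (2 (2r+1)!)` times `∑_{1 ≤ m ≤ r} C(2r+1, 2m) 2^(2m) B_(2m)`.
That sum is `2r`: the full sum `∑_i C(n, i) 2^i B_i = 2^n B_n(1/2) = (2 - 2^n) B_n` vanishes
for odd `n = 2r+1`, its odd terms vanish except `-(2r+1)` at `i = 1`, and its term at `i = 0`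
is `1`. -/

open Real

/-- The Riemann zeta function at natural arguments `s > 1`, as a real series. -/
noncomputable def zetaR (s : ℕ) : ℝ := ∑' n : ℕ, 1 / (n + 1 : ℝ) ^ s

open Finset Nat

lemma zetaR_two_mul {m : ℕ} (hm : m ≠ 0) :
    zetaR (2 * m) = (-1) ^ (m + 1) * 2 ^ (2 * m - 1) * π ^ (2 * m) * bernoulli (2 * m) /
      (2 * m)! := by
  have h := (hasSum_nat_add_iff' 1).mpr (hasSum_zeta_nat hm)
  simpa [zetaR, hm] using h.tsum_eq

lemma sum_range_two_mul {M : Type*} [AddCommMonoid M] (f : ℕ → M) (n : ℕ) :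
    ∑ i ∈ range (2 * n), f i = ∑ j ∈ range n, (f (2 * j) + f (2 * j + 1)) := by
  induction n with
  | zero => simp
  | succ n ih => rw [mul_add_one, sum_range_succ, sum_range_succ, sum_range_succ, ih, add_assoc]

lemma sum_choose_mul_two_pow_mul_bernoulli (n : ℕ) :
    ∑ i ∈ range (n + 1), (n.choose i : ℝ) * 2 ^ i * bernoulli i = (2 - 2 ^ n) * bernoulli n := by
  have h := bernoulliFun_eval_half n
  simp only [bernoulliFun, Polynomial.bernoulli, Polynomial.map_sum, Polynomial.map_monomial,
    Polynomial.eval_finsetSum, Polynomial.eval_monomial] at h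
  calc ∑ i ∈ range (n + 1), (n.choose i : ℝ) * 2 ^ i * bernoulli i
      = 2 ^ n * ∑ i ∈ range (n + 1), algebraMap ℚ ℝ (bernoulli i * n.choose i) * 2⁻¹ ^ (n - i) := by
        rw [mul_sum]
        refine sum_congr rfl fun i hi => ?_
        have hi : i ≤ n := Nat.lt_succ_iff.mp (mem_range.mp hi)
        rw [map_mul, map_natCast, eq_ratCast, inv_pow, ← pow_sub_mul_pow 2 hi]
        field_simp
    _ = (2 - 2 ^ n) * bernoulli n := by
        rw [h]
        field_simp

lemma sum_choose_mul_two_pow_mul_bernoulli_odd (r : ℕ) :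
    ∑ i ∈ range (2 * r + 2), ((2 * r + 1).choose i : ℝ) * 2 ^ i * bernoulli i = 0 := by
  rw [sum_choose_mul_two_pow_mul_bernoulli (2 * r + 1)]
  rcases eq_or_ne r 0 with rfl | hr
  · norm_num
  · rw [bernoulli_eq_zero_of_odd (odd_two_mul_add_one r) (by omega)]
    simp

lemma sum_choose_mul_two_pow_mul_bernoulli_even (r : ℕ) :
    ∑ j ∈ range r, ((2 * r + 1).choose (2 * j + 2) : ℝ) * 2 ^ (2 * j + 2) * bernoulli (2 * j + 2)
      = 2 * r := by
  have h := sum_choose_mul_two_pow_mul_bernoulli_odd r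
  rw [show 2 * r + 2 = 2 * (r + 1) by ring, sum_range_two_mul, sum_range_succ'] at h
  have hodd : ∀ j ∈ range r, ((2 * r + 1).choose (2 * (j + 1) + 1) : ℝ) * 2 ^ (2 * (j + 1) + 1)
      * bernoulli (2 * (j + 1) + 1) = 0 := fun j _ => by
    rw [bernoulli_eq_zero_of_odd (odd_two_mul_add_one _) (by omega), Rat.cast_zero, mul_zero]
  rw [sum_add_distrib, sum_eq_zero hodd] at h
  norm_num [mul_add_one, bernoulli_one] at h
  linarith

lemma zetaR_two_mul_div_factorial (k : ℕ) {m : ℕ} (hm : m ≠ 0) :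
    (-1 : ℝ) ^ k * π ^ (2 * k) * zetaR (2 * m) / (2 * k + 1)! =
      (-1) ^ (k + m - 1) * π ^ (2 * (k + m)) / (2 * (2 * k + 1 + 2 * m)!) *
        ((2 * k + 1 + 2 * m).choose (2 * m) * 2 ^ (2 * m) * bernoulli (2 * m)) := by
  have hfact : ((2 * k + 1 + 2 * m)! : ℝ) =
      (2 * k + 1 + 2 * m).choose (2 * m) * (2 * k + 1)! * (2 * m)! := by
    exact_mod_cast (Nat.add_choose_mul_factorial_mul_factorial _ _).symm
  have hsign : (-1 : ℝ) ^ (k + m - 1) = (-1) ^ k * (-1) ^ (m + 1) := by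
    rw [← pow_add, show k + (m + 1) = k + m - 1 + 2 by omega, pow_add]
    norm_num
  have htwo : (2 : ℝ) ^ (2 * m) = 2 * 2 ^ (2 * m - 1) := by
    rw [← pow_succ' (2 : ℝ), Nat.sub_add_cancel (by omega)]
  have hchoose : ((2 * k + 1 + 2 * m).choose (2 * m) : ℝ) ≠ 0 := by
    exact_mod_cast (Nat.choose_pos (by omega)).ne'
  rw [zetaR_two_mul hm, hfact, hsign, htwo]
  field_simp
  ring

theorem stmt_4_general (r : ℕ) :
    ∑ k ∈ Finset.range r,
        (-1 : ℝ) ^ k * π ^ (2 * k) * zetaR (2 * r - 2 * k) / (Nat.factorial (2 * k + 1))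
      = (-1 : ℝ) ^ (r - 1) * r * π ^ (2 * r) / (Nat.factorial (2 * r + 1)) := by
  have hterm : ∀ k ∈ range r,
      (-1 : ℝ) ^ k * π ^ (2 * k) * zetaR (2 * r - 2 * k) / (2 * k + 1)! =
        (-1) ^ (r - 1) * π ^ (2 * r) / (2 * (2 * r + 1)!) *
          ((2 * r + 1).choose (2 * (r - 1 - k) + 2) * 2 ^ (2 * (r - 1 - k) + 2) *
            bernoulli (2 * (r - 1 - k) + 2)) := by
    intro k hk
    have hkr : k < r := mem_range.mp hk
    rw [show 2 * r - 2 * k = 2 * (r - k) by omega,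
      zetaR_two_mul_div_factorial k (by omega : r - k ≠ 0), show k + (r - k) = r by omega,
      show 2 * (r - 1 - k) + 2 = 2 * (r - k) by omega, show 2 * k + 1 + 2 * (r - k) = 2 * r + 1 by omega]
  rw [sum_congr rfl hterm, ← mul_sum,
    sum_range_reflect (fun j => ((2 * r + 1).choose (2 * j + 2) : ℝ) * 2 ^ (2 * j + 2) *
      bernoulli (2 * j + 2)) r, sum_choose_mul_two_pow_mul_bernoulli_even]
  field_simp

theorem stmt_4 (r : ℕ) (hr : 0 < r) :
    ∑ k ∈ Finset.range r,
        (-1 : ℝ) ^ k * π ^ (2 * k) * zetaR (2 * r - 2 * k) / (Nat.factorial (2 * k + 1))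
      = (-1 : ℝ) ^ (r - 1) * r * π ^ (2 * r) / (Nat.factorial (2 * r + 1)) :=
  stmt_4_general r
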